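/- Let T be a binary tree with m nodes, numbered 0,...,m−1 in inorder, with root τ. Then for any node u (0 ≤ u < m), the sum over all nodes j with inorder number less than u of (l_j + r_j) equals 2u − L_τ − l_u + Ldepth(u) − Rdepth(u) + 1. -/

import Mathlib

inductive BT where
  | leaf : BT
  | node : BT → BT → BT
deriving DecidableEq

namespace BT

/-- Number of nodes. -/
def size : BT → ℕ
  | leaf => 0
  | node l r => l.size + r.size + 1

/-- Inorder list of node positions (paths from the root; `false` = left step). -/
def inList : BT → List (List Bool)
  | leaf => []
  | node l r => (l.inList).map (List.cons false) ++ [] :: (r.inList).map (List.cons true)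

/-- Preorder list of node positions. -/
def preList : BT → List (List Bool)
  | leaf => []
  | node l r => [] :: ((l.preList).map (List.cons false) ++ (r.preList).map (List.cons true))

/-- Subtree rooted at a given position, if the position is valid. -/
def subtree? : BT → List Bool → Option BT
  | t, [] => some t
  | leaf, _ :: _ => none
  | node l r, b :: p => if b then r.subtree? p else l.subtree? p

/-- Size of the left spine (maximal path following left children, top node included). -/
def Lspine : BT → ℕ
  | leaf => 0
  | node l _ => l.Lspine + 1

/-- Size of the right spine. -/
def Rspine : BT → ℕ
  | leaf => 0
  | node _ r => r.Rspine + 1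

/-- Size of the left inner spine of the root: right spine of the left child. -/
def lv : BT → ℕ
  | leaf => 0
  | node l _ => l.Rspine

/-- Size of the right inner spine of the root: left spine of the right child. -/
def rv : BT → ℕ
  | leaf => 0
  | node _ r => r.Lspine

/-- Sum of `f` over all (sub)trees rooted at nodes of the tree. -/
def sumNodes (f : BT → ℕ) : BT → ℕ
  | leaf => 0
  | node l r => f (node l r) + sumNodes f l + sumNodes f r

/-- Number of leaf nodes (nodes with no children). -/
def leaves : BT → ℕ
  | leaf => 0
  | node leaf leaf => 1
  | node l r => leaves l + leaves r

end BT

/-- Longest common prefix of two paths: the LCA of two positions in a binary tree. -/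
def lcp : List Bool → List Bool → List Bool
  | a :: p, b :: q => if a = b then a :: lcp p q else []
  | _, _ => []

/-- Index of the minimum element of a list (0 if empty). -/
def minIdx {α : Type*} [LinearOrder α] (l : List α) : ℕ :=
  match l.argmin id with
  | none => 0
  | some a => l.idxOf a

/-- Cartesian tree construction with fuel. -/
def cartesianAux {α : Type*} [LinearOrder α] : ℕ → List α → BT
  | 0, _ => .leaf
  | _ + 1, [] => .leaf
  | n + 1, l@(_ :: _) =>
      .node (cartesianAux n (l.take (minIdx l))) (cartesianAux n (l.drop (minIdx l + 1)))

/-- The Cartesian tree of a list: root at the position of the minimum,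
recursively built on the prefix before and the suffix after the minimum. -/
def cartesian {α : Type*} [LinearOrder α] (l : List α) : BT :=
  cartesianAux l.length l

/-- `k` is the position of the minimum of `A` on the range `[i, j]`. -/
def isArgmin {α : Type*} [LinearOrder α] {n : ℕ} (A : Fin n → α) (i j k : Fin n) : Prop :=
  i ≤ k ∧ k ≤ j ∧ ∀ m, i ≤ m → m ≤ j → A k ≤ A m

/-- `k` is the position of the second smallest element of `A` on the range `[i, j]`. -/
def isSecondMin {α : Type*} [LinearOrder α] {n : ℕ} (A : Fin n → α) (i j k : Fin n) : Prop :=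
  i ≤ k ∧ k ≤ j ∧
    ∃ m, isArgmin A i j m ∧ k ≠ m ∧ ∀ l, i ≤ l → l ≤ j → l ≠ m → A k ≤ A l

/-- The node with inorder number `i` in `t` has a left child. -/
def hasLeftChildAt (t : BT) (i : ℕ) : Prop :=
  ∃ (p : List Bool) (ll lr r : BT),
    t.inList[i]? = some p ∧ t.subtree? p = some (.node (.node ll lr) r)

/-- `l_j + r_j` for the node with inorder number `j` of `t` (0 if out of range). -/
def lrAt (t : BT) (j : ℕ) : ℕ :=
  ((t.inList[j]?).bind t.subtree?).elim 0 fun s => s.lv + s.rv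


/-!
Every node lies on exactly one maximal chain of right-child edges, whose top is either the root
or the left child of some node `w`, in which case the chain is the left inner spine of `w`.
Hence over a whole tree `∑ l_j = n - R_τ` and symmetrically `∑ r_j = n - L_τ`.
For a prefix, induct on the tree: the nodes before `u` are either a prefix of the left subtree,
or all of the left subtree (contributing `2|l| - L_l - R_l`), the root (contributing `R_l + L_r`)
and a prefix of the right subtree. A left step on the path to `u` raises both `L_τ` and
`Ldepth(u)` by one.
-/

namespace BT

theorem inList_length (t : BT) : t.inList.length = t.size := by
  induction t with
  | leaf => rfl
  | node l r ihl ihr =>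
    simp only [inList, size, List.length_append, List.length_map, List.length_cons, ihl, ihr]
    omega

variable {l r : BT}

theorem getElem?_inList_node_of_lt {j : ℕ} (h : j < l.size) :
    (node l r).inList[j]? = l.inList[j]?.map (List.cons false) := by
  rw [inList, List.getElem?_append_left (by simpa [inList_length]), List.getElem?_map]

theorem getElem?_inList_node_size : (node l r).inList[l.size]? = some [] := by
  rw [inList, List.getElem?_append_right (by simp [inList_length])]
  simp [inList_length]

theorem getElem?_inList_node_add (j : ℕ) :
    (node l r).inList[l.size + 1 + j]? = r.inList[j]?.map (List.cons true) := by
  have hlen : (l.inList.map (List.cons false)).length = l.size := by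
    rw [List.length_map, inList_length]
  rw [inList, List.getElem?_append_right (by omega), hlen,
    show l.size + 1 + j - l.size = j + 1 by omega, List.getElem?_cons_succ, List.getElem?_map]

theorem getElem?_inList_node_eq_some {u : ℕ} {p : List Bool} :
    (node l r).inList[u]? = some p ↔
      (u < l.size ∧ ∃ q, l.inList[u]? = some q ∧ p = false :: q) ∨ (u = l.size ∧ p = []) ∨
        ∃ j q, u = l.size + 1 + j ∧ r.inList[j]? = some q ∧ p = true :: q := by
  constructor
  · intro hp
    rcases lt_trichotomy u l.size with h | rfl | h
    · rw [getElem?_inList_node_of_lt h, Option.map_eq_some_iff] at hp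
      obtain ⟨q, hq, rfl⟩ := hp
      exact .inl ⟨h, q, hq, rfl⟩
    · rw [getElem?_inList_node_size, Option.some_inj] at hp
      exact .inr (.inl ⟨rfl, hp.symm⟩)
    · obtain ⟨j, rfl⟩ : ∃ j, u = l.size + 1 + j := ⟨u - l.size - 1, by omega⟩
      rw [getElem?_inList_node_add, Option.map_eq_some_iff] at hp
      obtain ⟨q, hq, rfl⟩ := hp
      exact .inr (.inr ⟨j, q, rfl, hq, rfl⟩)
  · rintro (⟨h, q, hq, rfl⟩ | ⟨rfl, rfl⟩ | ⟨j, q, rfl, hq, rfl⟩)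
    · simp [getElem?_inList_node_of_lt h, hq]
    · exact getElem?_inList_node_size
    · simp [getElem?_inList_node_add, hq]

theorem lrAt_node_of_lt {j : ℕ} (h : j < l.size) : lrAt (node l r) j = lrAt l j := by
  simp [lrAt, getElem?_inList_node_of_lt h, Option.bind_map, Function.comp_def, subtree?]

theorem lrAt_node_size : lrAt (node l r) l.size = l.Rspine + r.Lspine := by
  simp [lrAt, getElem?_inList_node_size, subtree?, lv, rv]

theorem lrAt_node_add (j : ℕ) : lrAt (node l r) (l.size + 1 + j) = lrAt r j := by
  simp [lrAt, getElem?_inList_node_add, Option.bind_map, Function.comp_def, subtree?]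

theorem sum_range_lrAt_node_of_le {u : ℕ} (h : u ≤ l.size) :
    ∑ j ∈ Finset.range u, lrAt (node l r) j = ∑ j ∈ Finset.range u, lrAt l j :=
  Finset.sum_congr rfl fun _ hj => lrAt_node_of_lt ((Finset.mem_range.mp hj).trans_le h)

theorem sum_range_lrAt_node_add (k : ℕ) :
    ∑ j ∈ Finset.range (l.size + 1 + k), lrAt (node l r) j
      = (∑ j ∈ Finset.range l.size, lrAt l j) + (l.Rspine + r.Lspine)
        + ∑ j ∈ Finset.range k, lrAt r j := by
  rw [Finset.sum_range_add, Finset.sum_range_succ, sum_range_lrAt_node_of_le le_rfl,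
    lrAt_node_size]
  simp only [lrAt_node_add]

theorem sum_range_size_lrAt_add_Lspine_add_Rspine (t : BT) :
    (∑ j ∈ Finset.range t.size, lrAt t j) + t.Lspine + t.Rspine = 2 * t.size := by
  induction t with
  | leaf => rfl
  | node l r ihl ihr =>
    rw [show (node l r).size = l.size + 1 + r.size by simp only [size]; omega,
      sum_range_lrAt_node_add, Lspine, Rspine]
    omega

end BT

/-- `Ldepth(u) = p.count false` and `Rdepth(u) = p.count true`; the identity is stated
additively to avoid truncated subtraction. -/
theorem stmt7 (t : BT) (u : ℕ) (p : List Bool) (s : BT)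
    (hp : t.inList[u]? = some p) (hs : t.subtree? p = some s) :
    (∑ j ∈ Finset.range u, lrAt t j) + t.Lspine + s.lv + p.count true
      = 2 * u + p.count false + 1 := by
  induction t generalizing u p s with
  | leaf => simp [BT.inList] at hp
  | node l r ihl ihr =>
    rcases BT.getElem?_inList_node_eq_some.mp hp with
      ⟨hu, q, hq, rfl⟩ | ⟨rfl, rfl⟩ | ⟨j, q, rfl, hq, rfl⟩
    · have ih := ihl u q s hq (by simpa [BT.subtree?] using hs)
      rw [BT.sum_range_lrAt_node_of_le hu.le, BT.Lspine]
      simp only [List.count_cons_self, List.count_cons_of_ne, ne_eq, Bool.false_eq_true,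
        not_false_eq_true]
      omega
    · obtain rfl : BT.node l r = s := Option.some_inj.mp hs
      have hl := BT.sum_range_size_lrAt_add_Lspine_add_Rspine l
      rw [BT.sum_range_lrAt_node_of_le le_rfl, BT.Lspine, BT.lv]
      simp only [List.count_nil]
      omega
    · have ih := ihr j q s hq (by simpa [BT.subtree?] using hs)
      have hl := BT.sum_range_size_lrAt_add_Lspine_add_Rspine l
      rw [BT.sum_range_lrAt_node_add, BT.Lspine]
      simp only [List.count_cons_self, List.count_cons_of_ne, ne_eq, Bool.true_eq_false,
        not_false_eq_true]
      omega
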